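/- arXiv:quant-ph/9901029 — 2 statements merged into one kernel-verified Lean document; each statement's English description precedes it below -/
import Mathlib

section
/- Let n ≥ 2 be an integer and G = S_n ≀ S_2. The subgroup G′ of G generated by the involutive swaps has index 2 in G. -/
open scoped Classical

@[ext] structure Wr (n : ℕ) where
  fst : Equiv.Perm (Fin n)
  snd : Equiv.Perm (Fin n)
  bit : ZMod 2
  deriving DecidableEq, Fintype

namespace Wr

variable {n : ℕ}

protected def mul (x y : Wr n) : Wr n :=
  ⟨if x.bit = 0 then x.fst * y.fst else x.fst * y.snd,
   if x.bit = 0 then x.snd * y.snd else x.snd * y.fst,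
   x.bit + y.bit⟩

protected def inv (x : Wr n) : Wr n :=
  ⟨if x.bit = 0 then x.fst⁻¹ else x.snd⁻¹,
   if x.bit = 0 then x.snd⁻¹ else x.fst⁻¹,
   x.bit⟩

instance : Group (Wr n) where
  mul := Wr.mul
  one := ⟨1, 1, 0⟩
  inv := Wr.inv
  mul_assoc x y z := by
    show Wr.mul (Wr.mul x y) z = Wr.mul x (Wr.mul y z)
    obtain ⟨a, b, c⟩ := x; obtain ⟨d, e, f⟩ := y; obtain ⟨g, h, i⟩ := z
    rcases (by decide : ∀ j : ZMod 2, j = 0 ∨ j = 1) c with rfl | rfl <;> rcases (by decide : ∀ j : ZMod 2, j = 0 ∨ j = 1) f with rfl | rfl <;>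
      simp [Wr.mul, mul_assoc, show (1 : ZMod 2) ≠ 0 by decide,
        show (1 + 1 : ZMod 2) = 0 by decide, show ∀ j : ZMod 2, 1 + (1 + j) = j by decide]
  one_mul x := by
    show Wr.mul ⟨1, 1, 0⟩ x = x
    simp [Wr.mul]
  mul_one x := by
    show Wr.mul x ⟨1, 1, 0⟩ = x
    obtain ⟨a, b, c⟩ := x
    rcases (by decide : ∀ j : ZMod 2, j = 0 ∨ j = 1) c with rfl | rfl <;> simp [Wr.mul]
  inv_mul_cancel x := by
    show Wr.mul (Wr.inv x) x = ⟨1, 1, 0⟩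
    obtain ⟨a, b, c⟩ := x
    rcases (by decide : ∀ j : ZMod 2, j = 0 ∨ j = 1) c with rfl | rfl <;> simp [Wr.mul, Wr.inv, show (1 : ZMod 2) ≠ 0 by decide,
      show (1 + 1 : ZMod 2) = 0 by decide]

/-- An involutive swap: an element of the form `(g, g⁻¹, 1)`. -/
def IsSwap (k : Wr n) : Prop := ∃ g : Equiv.Perm (Fin n), k = ⟨g, g⁻¹, 1⟩

/-- The faithful action of `S_n ≀ S_2` on `Fin n ⊕ Fin n`:
`ι(σ,τ,0)` maps `inl i ↦ inl (σ i)`, `inr i ↦ inr (τ i)`, while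
`ι(σ,τ,1)` maps `inl i ↦ inr (τ i)`, `inr i ↦ inl (σ i)`. -/
def iota : Wr n →* Equiv.Perm (Fin n ⊕ Fin n) where
  toFun x := Equiv.sumCongr x.fst x.snd *
    (if x.bit = 0 then 1 else Equiv.sumComm (Fin n) (Fin n))
  map_one' := by
    simp [show ((1 : Wr n)).bit = 0 from rfl, show ((1 : Wr n)).fst = 1 from rfl,
      show ((1 : Wr n)).snd = 1 from rfl]
  map_mul' x y := by
    have hxy : x * y = Wr.mul x y := rfl
    obtain ⟨a, b, c⟩ := x; obtain ⟨d, e, f⟩ := y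
    rw [hxy]
    rcases (by decide : ∀ j : ZMod 2, j = 0 ∨ j = 1) c with rfl | rfl <;> rcases (by decide : ∀ j : ZMod 2, j = 0 ∨ j = 1) f with rfl | rfl <;>
      · ext u
        rcases u with u | u <;>
          simp [Wr.mul, show (1 : ZMod 2) ≠ 0 by decide,
            show (1 + 1 : ZMod 2) = 0 by decide, Equiv.Perm.mul_apply]

end Wr

/-- The Hilbert space `ℂ[G^m]`. -/
abbrev GIHilb (n m : ℕ) : Type := EuclideanSpace ℂ (Fin m → Wr n)

noncomputable section

namespace Wr

/-- The `k`-vector associated to `c ∈ G^m`: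
`x ↦ 2^{-m/2} ∏_i [x i ∈ {c i, c i * k}]`. -/
def kvec (n m : ℕ) (k : Wr n) (c : Fin m → Wr n) : GIHilb n m :=
  (WithLp.equiv 2 _).symm fun x =>
    ((Real.sqrt (2 ^ m) : ℝ)⁻¹ : ℂ) *
      ∏ i, (if x i = c i ∨ x i = c i * k then (1 : ℂ) else 0)

/-- `ℋ(k)`: the span of all `k`-vectors. -/
def kSpace (n m : ℕ) (k : Wr n) : Submodule ℂ (GIHilb n m) :=
  Submodule.span ℂ (Set.range (kvec n m k))

/-- `ℋ₁ = ∑_k ℋ(k)`, the sum over all involutive swaps `k`. -/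
def H1 (n m : ℕ) : Submodule ℂ (GIHilb n m) :=
  ⨆ k ∈ {k : Wr n | IsSwap k}, kSpace n m k

/-- The tensor product of coset states of the subgroup `H` with coset representatives `c`:
`x ↦ |H|^{-m/2} ∏_i [x i ∈ c i H]`. -/
def cosetState {n : ℕ} (H : Subgroup (Wr n)) (m : ℕ) (c : Fin m → Wr n) : GIHilb n m :=
  (WithLp.equiv 2 _).symm fun x =>
    ((Real.sqrt ((Nat.card H : ℝ) ^ m))⁻¹ : ℂ) *
      ∏ i, (if (c i)⁻¹ * x i ∈ H then (1 : ℂ) else 0)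

end Wr

/-- The subgroup of `S_n ≀ S_2` of elements acting (via `ι`) as automorphisms of the graph `Γ`. -/
def autSubgroup {n : ℕ} (Γ : SimpleGraph (Fin n ⊕ Fin n)) : Subgroup (Wr n) where
  carrier := {h | ∀ u v, Γ.Adj (Wr.iota h u) (Wr.iota h v) ↔ Γ.Adj u v}
  one_mem' := by intro u v; simp
  mul_mem' := by
    intro a b ha hb u v
    rw [map_mul, Equiv.Perm.mul_apply, Equiv.Perm.mul_apply, ha, hb]
  inv_mem' := by
    intro a ha u v
    have := ha ((Wr.iota a)⁻¹ u) ((Wr.iota a)⁻¹ v)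
    simpa [map_inv] using this.symm

end

/-!
The sign product `(σ, τ, b) ↦ sgn σ · sgn τ` is a homomorphism onto `{±1}` (for `n ≥ 2`) that
kills every swap `(g, g⁻¹, 1)`, so it suffices to show that its kernel lies in `G'`.
The product of the swaps of `c⁻¹` and `x⁻¹ c⁻¹` is `(x, c x⁻¹ c⁻¹, 0)`. As every permutation is
conjugate to its inverse, `G'` contains `(x⁻¹, x, 0) (x, x, 0) = (1, x², 0)`, hence
`(1, c, 0) = (1, (c²)², 0)` for every 3-cycle `c`, hence `(1, π, 0)` for every even `π`.
Then `(σ, τ, 0) = (σ, σ⁻¹, 0) (1, στ, 0)` and `(σ, τ, 1) = (σ, τ, 0) (1, 1, 1)`.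
-/

namespace Wr

variable {n : ℕ}

lemma mk_mul_mk (a b d e : Equiv.Perm (Fin n)) (c f : ZMod 2) :
    (⟨a, b, c⟩ : Wr n) * ⟨d, e, f⟩ =
      ⟨if c = 0 then a * d else a * e, if c = 0 then b * e else b * d, c + f⟩ := rfl

def signProd : Wr n →* ℤˣ where
  toFun x := Equiv.Perm.sign x.fst * Equiv.Perm.sign x.snd
  map_one' := by simp [show (1 : Wr n) = ⟨1, 1, 0⟩ from rfl]
  map_mul' := by
    rintro ⟨a, b, c⟩ ⟨d, e, f⟩
    rw [mk_mul_mk]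
    split_ifs <;> simp only [map_mul] <;> ac_rfl

lemma signProd_surjective (hn : 2 ≤ n) : Function.Surjective (signProd (n := n)) := by
  have : Nontrivial (Fin n) := Fin.nontrivial_iff_two_le.mpr hn
  intro u
  obtain ⟨σ, hσ⟩ := Equiv.Perm.sign_surjective (Fin n) u
  exact ⟨⟨σ, 1, 0⟩, by simp [signProd, hσ]⟩

lemma index_ker_signProd (hn : 2 ≤ n) : (signProd (n := n)).ker.index = 2 := by
  rw [Subgroup.index_ker, MonoidHom.range_eq_top_of_surjective _ (signProd_surjective hn),
    Subgroup.card_top, Nat.card_eq_fintype_card, Fintype.card_units_int]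

abbrev swapClosure (n : ℕ) : Subgroup (Wr n) := Subgroup.closure {k : Wr n | IsSwap k}

lemma mk_inv_mem_swapClosure (g : Equiv.Perm (Fin n)) : (⟨g, g⁻¹, 1⟩ : Wr n) ∈ swapClosure n :=
  Subgroup.subset_closure ⟨g, rfl⟩

lemma mk_mem_swapClosure_of_isConj {x y : Equiv.Perm (Fin n)} (h : IsConj x⁻¹ y) :
    (⟨x, y, 0⟩ : Wr n) ∈ swapClosure n := by
  obtain ⟨c, rfl⟩ := isConj_iff.mp h
  have := mul_mem (mk_inv_mem_swapClosure c⁻¹) (mk_inv_mem_swapClosure (x⁻¹ * c⁻¹))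
  simpa [mk_mul_mk, mul_assoc, show (1 + 1 : ZMod 2) = 0 from rfl] using this

def inr : Equiv.Perm (Fin n) →* Wr n where
  toFun π := ⟨1, π, 0⟩
  map_one' := rfl
  map_mul' _ _ := by simp [mk_mul_mk]

lemma inr_sq_mem_swapClosure (x : Equiv.Perm (Fin n)) : inr (x ^ 2) ∈ swapClosure n := by
  have hx : IsConj x⁻¹ x := Equiv.Perm.isConj_iff_cycleType_eq.mpr (Equiv.Perm.cycleType_inv x)
  have := mul_mem (mk_mem_swapClosure_of_isConj (x := x⁻¹) (by rw [inv_inv]))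
    (mk_mem_swapClosure_of_isConj hx)
  simpa [mk_mul_mk, inr, sq] using this

lemma alternatingGroup_le_comap_inr_swapClosure :
    alternatingGroup (Fin n) ≤ (swapClosure n).comap inr := by
  rw [← Equiv.Perm.closure_three_cycles_eq_alternating, Subgroup.closure_le]
  intro c hc
  have hc3 : c ^ 3 = 1 := hc.orderOf ▸ pow_orderOf_eq_one c
  have hc4 : (c ^ 2) ^ 2 = c := by rw [← pow_mul, pow_succ' c 3, hc3, mul_one]
  have := inr_sq_mem_swapClosure (c ^ 2)
  rwa [hc4] at this

lemma mk_zero_mem_swapClosure {σ τ : Equiv.Perm (Fin n)}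
    (h : Equiv.Perm.sign σ * Equiv.Perm.sign τ = 1) : (⟨σ, τ, 0⟩ : Wr n) ∈ swapClosure n := by
  have hστ : σ * τ ∈ alternatingGroup (Fin n) := by
    rw [Equiv.Perm.mem_alternatingGroup, map_mul, h]
  have := mul_mem (mk_mem_swapClosure_of_isConj (IsConj.refl σ⁻¹))
    (alternatingGroup_le_comap_inr_swapClosure hστ)
  simpa [mk_mul_mk, inr, mul_assoc] using this

lemma swapClosure_eq_ker_signProd : swapClosure n = (signProd (n := n)).ker := by
  apply le_antisymm
  · rw [Subgroup.closure_le]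
    rintro _ ⟨g, rfl⟩
    simp [signProd]
  · rintro ⟨σ, τ, b⟩ h
    have h0 := mk_zero_mem_swapClosure h
    obtain rfl | rfl := (by decide : ∀ j : ZMod 2, j = 0 ∨ j = 1) b
    · exact h0
    · simpa [mk_mul_mk] using mul_mem h0 (mk_inv_mem_swapClosure 1)

end Wr

/-- For `n ≥ 2`, the subgroup of `G = S_n ≀ S_2` generated by the involutive swaps has
index `2` in `G`. -/
theorem closure_swaps_index_eq_two
    (n : ℕ) (hn : 2 ≤ n) :
    (Subgroup.closure {k : Wr n | Wr.IsSwap k}).index = 2 := by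
  rw [← Wr.index_ker_signProd hn, ← Wr.swapClosure_eq_ker_signProd]
end

section
/- Let n and m be positive integers, G = S_n ≀ S_2, H a subgroup of G, and k ∈ H an involutive swap belonging to H. Then for every c ∈ G^m, the tensor product of coset states ψ_c lies in the subspace ℋ(k) spanned by the k-vectors. -/
open scoped Classical

/-! Right multiplication by `k ∈ H` preserves each left coset `a H`, so the pairs `{y, y k}` with
`y ∈ a H` cover `a H`, each point exactly `#{1, k⁻¹}` times. Taking products over the `m`
coordinates, the sum of the (unnormalised) `k`-vectors `v_k(d)` over `d ∈ c H` is a nonzero multiple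
of the indicator of `c H`, which is `ψ_c` up to normalisation. -/

section CosetIndicators

open Finset

variable {G ι : Type*} [Group G]

theorem eq_or_eq_mul_iff_mem_pair (k x y : G) :
    x = y ∨ x = y * k ↔ y ∈ ({x, x * k⁻¹} : Finset G) := by
  rw [mem_insert, mem_singleton, eq_mul_inv_iff_mul_eq, eq_comm (a := y * k)]
  exact or_congr eq_comm Iff.rfl

theorem card_pair_mul_inv (k x : G) : #({x, x * k⁻¹} : Finset G) = #({1, k⁻¹} : Finset G) := by
  rw [← card_smul_finset x ({1, k⁻¹} : Finset G), smul_finset_insert, smul_finset_singleton,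
    smul_eq_mul, smul_eq_mul, mul_one]

variable [Fintype G] [Fintype ι]

noncomputable def cosetIndicator (H : Subgroup G) (c x : ι → G) : ℂ :=
  ∏ i, if (c i)⁻¹ * x i ∈ H then 1 else 0

noncomputable def pairIndicator (k : G) (d x : ι → G) : ℂ :=
  ∏ i, if x i = d i ∨ x i = d i * k then 1 else 0

theorem sum_coset_mul_pair {H : Subgroup G} {k : G} (hk : k ∈ H) (a x : G) :
    ∑ y, (if a⁻¹ * y ∈ H then (1 : ℂ) else 0) * (if x = y ∨ x = y * k then 1 else 0) =
      #({1, k⁻¹} : Finset G) * if a⁻¹ * x ∈ H then 1 else 0 := by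
  have hcoset : ∀ y ∈ ({x, x * k⁻¹} : Finset G), a⁻¹ * y ∈ H ↔ a⁻¹ * x ∈ H := by
    simp only [mem_insert, mem_singleton]
    rintro y (rfl | rfl)
    · rfl
    · rw [← mul_assoc, H.mul_mem_cancel_right (H.inv_mem hk)]
  simp_rw [eq_or_eq_mul_iff_mem_pair, mul_boole]
  rw [← sum_filter, filter_mem_eq_inter, univ_inter,
    sum_congr rfl fun y hy => if_congr (hcoset y hy) rfl rfl, sum_const, card_pair_mul_inv,
    nsmul_eq_mul, mul_boole]

theorem sum_cosetIndicator_smul_pairIndicator {H : Subgroup G} {k : G} (hk : k ∈ H)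
    (c : ι → G) :
    ∑ d, cosetIndicator H c d • pairIndicator k d =
      ((#({1, k⁻¹} : Finset G) : ℂ) ^ Fintype.card ι) • cosetIndicator H c := by
  funext x
  simp only [Finset.sum_apply, Pi.smul_apply, smul_eq_mul, cosetIndicator, pairIndicator,
    ← prod_mul_distrib]
  rw [← Fintype.prod_sum fun i y => (if (c i)⁻¹ * y ∈ H then (1 : ℂ) else 0) *
      (if x i = y ∨ x i = y * k then 1 else 0)]
  simp only [sum_coset_mul_pair hk, prod_mul_distrib, prod_const, card_univ]

theorem cosetIndicator_mem_span_pairIndicator {H : Subgroup G} {k : G} (hk : k ∈ H)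
    (c : ι → G) :
    cosetIndicator H c ∈ Submodule.span ℂ (Set.range (pairIndicator k)) := by
  have hN : ((#({1, k⁻¹} : Finset G) : ℂ) ^ Fintype.card ι) ≠ 0 := by simp
  rw [← inv_smul_smul₀ hN (cosetIndicator H c), ← sum_cosetIndicator_smul_pairIndicator hk]
  exact Submodule.smul_mem _ _ <| Submodule.sum_mem _ fun d _ =>
    Submodule.smul_mem _ _ <| Submodule.subset_span ⟨d, rfl⟩

end CosetIndicators

namespace Wr

variable {n m : ℕ}

theorem cosetState_eq_smul (H : Subgroup (Wr n)) (c : Fin m → Wr n) :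
    cosetState H m c =
      ((Real.sqrt ((Nat.card H : ℝ) ^ m))⁻¹ : ℂ) • WithLp.toLp 2 (cosetIndicator H c) := by
  ext x
  simp [cosetState, cosetIndicator]

theorem toLp_pairIndicator_mem_kSpace (k : Wr n) (d : Fin m → Wr n) :
    WithLp.toLp 2 (pairIndicator k d) ∈ kSpace n m k := by
  have hkvec :
      kvec n m k d = ((Real.sqrt (2 ^ m) : ℝ)⁻¹ : ℂ) • WithLp.toLp 2 (pairIndicator k d) := by
    ext x
    simp only [kvec, pairIndicator, WithLp.equiv_symm_apply, PiLp.smul_apply, smul_eq_mul]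
    congr!
  have hβ : ((Real.sqrt (2 ^ m) : ℝ)⁻¹ : ℂ) ≠ 0 := by simp
  rw [← inv_smul_smul₀ hβ (WithLp.toLp 2 (pairIndicator k d)), ← hkvec]
  exact Submodule.smul_mem _ _ <| Submodule.subset_span ⟨d, rfl⟩

end Wr

theorem cosetState_mem_kSpace_general
    (n m : ℕ)
    (H : Subgroup (Wr n)) (k : Wr n) (hkH : k ∈ H)
    (c : Fin m → Wr n) :
    Wr.cosetState H m c ∈ Wr.kSpace n m k := by
  have hspan := Submodule.mem_map_of_mem
    (f := (WithLp.linearEquiv 2 ℂ ((Fin m → Wr n) → ℂ)).symm.toLinearMap)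
    (cosetIndicator_mem_span_pairIndicator hkH c)
  rw [Submodule.map_span, ← Set.range_comp] at hspan
  rw [Wr.cosetState_eq_smul]
  refine Submodule.smul_mem _ _ (Submodule.span_le.2 ?_ hspan)
  rintro _ ⟨d, rfl⟩
  exact Wr.toLp_pairIndicator_mem_kSpace k d

/-- If `k` is an involutive swap belonging to the subgroup `H`, then every tensor product of
coset states `ψ_c` lies in the subspace `ℋ(k)` spanned by the `k`-vectors. -/
theorem cosetState_mem_kSpace
    (n m : ℕ) (hn : 0 < n) (hm : 0 < m)
    (H : Subgroup (Wr n)) (k : Wr n) (hkH : k ∈ H) (hk : Wr.IsSwap k)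
    (c : Fin m → Wr n) :
    Wr.cosetState H m c ∈ Wr.kSpace n m k :=
  cosetState_mem_kSpace_general n m H k hkH c
end
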